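/- arXiv:1402.6105 — 2 statements merged into one kernel-verified Lean document; each statement's English description precedes it below -/
import Mathlib

section
/- Let X be a measurable space, G a sub-Markov kernel on X, v : X → [0,∞) measurable and δ > 0 such that G v(x) ≤ v(x) - δ·G(x,X) for all x ∈ X and G(x,X) ≤ 1. Then for every x ∈ X, ∑_{j=0}^∞ G^j(x, X) ≤ v(x)/δ + 1, where G^j denotes the j-fold iterate of the kernel (G^0(x,·) = δ_x). -/
open MeasureTheory ProbabilityTheory ENNReal

/-- The `j`-fold iterate of a kernel, with `G^0 = id` (i.e. `G^0(x,·) = δ_x`). -/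
noncomputable def kernelIter {X : Type*} [MeasurableSpace X]
    (G : Kernel X X) : ℕ → Kernel X X
  | 0 => Kernel.id
  | n + 1 => G ∘ₖ kernelIter G n

/-- Key estimate (6.6) of Proposition 6.6: under the Lyapunov condition
`Gv(x) + δ·G(x,X) ≤ v(x)` for a sub-Markov kernel `G`, one has
`∑ⱼ G^j(x,X) ≤ v(x)/δ + 1`. -/
theorem stmt10 {X : Type*} [MeasurableSpace X] (G : Kernel X X)
    (hsub : ∀ x, G x Set.univ ≤ 1)
    (v : X → ℝ≥0∞) (hv : Measurable v) (hvfin : ∀ x, v x ≠ ⊤)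
    (δ : ℝ≥0∞) (hδ : 0 < δ) (hδfin : δ ≠ ⊤)
    (hdrift : ∀ x, (∫⁻ y, v y ∂(G x)) + δ * G x Set.univ ≤ v x) :
    ∀ x, ∑' j : ℕ, kernelIter G j x Set.univ ≤ v x / δ + 1 := by
  have hGfin : IsFiniteKernel G := ⟨⟨1, one_lt_top, hsub⟩⟩
  intro x
  have key : ∀ n, (∫⁻ y, v y ∂(kernelIter G n x))
      + δ * ∑ j ∈ Finset.range n, kernelIter G (j+1) x Set.univ ≤ v x := by
    intro n
    induction n with
    | zero => simp [kernelIter, Kernel.id_apply, lintegral_dirac' _ hv]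
    | succ n ih =>
      have h1 : (∫⁻ y, v y ∂(kernelIter G (n+1) x))
          = ∫⁻ y, (∫⁻ z, v z ∂(G y)) ∂(kernelIter G n x) := by
        rw [show kernelIter G (n+1) = G ∘ₖ kernelIter G n from rfl,
          Kernel.lintegral_comp _ _ _ hv]
      have h2 : kernelIter G (n+1) x Set.univ
          = ∫⁻ y, G y Set.univ ∂(kernelIter G n x) := by
        rw [show kernelIter G (n+1) = G ∘ₖ kernelIter G n from rfl,
          Kernel.comp_apply' _ _ _ MeasurableSet.univ]
      have hm1 : Measurable fun y => ∫⁻ z, v z ∂(G y) :=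
        hv.lintegral_kernel
      have hm2 : Measurable fun y => δ * G y Set.univ :=
        (Kernel.measurable_coe G MeasurableSet.univ).const_mul δ
      calc (∫⁻ y, v y ∂(kernelIter G (n+1) x))
            + δ * ∑ j ∈ Finset.range (n+1), kernelIter G (j+1) x Set.univ
          = ((∫⁻ y, v y ∂(kernelIter G (n+1) x))
            + δ * kernelIter G (n+1) x Set.univ)
            + δ * ∑ j ∈ Finset.range n, kernelIter G (j+1) x Set.univ := by
            rw [Finset.sum_range_succ]; ring
        _ ≤ (∫⁻ y, v y ∂(kernelIter G n x))
            + δ * ∑ j ∈ Finset.range n, kernelIter G (j+1) x Set.univ := by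
            gcongr ?_ + _
            rw [h1, h2, ← lintegral_const_mul _ (Kernel.measurable_coe G MeasurableSet.univ),
              ← lintegral_add_left hm1]
            exact lintegral_mono fun y => hdrift y
        _ ≤ v x := ih
  have hpartial : ∀ n, ∑ j ∈ Finset.range n, kernelIter G j x Set.univ ≤ v x / δ + 1 := by
    intro n
    cases n with
    | zero => simp
    | succ n =>
      rw [Finset.sum_range_succ']
      have h0 : kernelIter G 0 x Set.univ = 1 := by
        simp [kernelIter, Kernel.id_apply]
      rw [h0]
      gcongr
      rw [ENNReal.le_div_iff_mul_le (Or.inl hδ.ne') (Or.inl hδfin), mul_comm]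
      exact le_trans (le_add_left le_rfl) (key n)
  rw [ENNReal.tsum_eq_iSup_sum]
  refine iSup_le fun s => ?_
  obtain ⟨n, hn⟩ := s.exists_nat_subset_range
  exact le_trans (Finset.sum_le_sum_of_subset hn) (hpartial n)
end

section
/- Let X be a measurable space, G a sub-Markov kernel on X, and ν a finite measure on X. Suppose μ is a finite measure on X satisfying μ(B) = ν(B) + ∫ G(x,B) dμ(x) for all measurable B, and suppose G^m(x,X) → 0 for each x ∈ X as m → ∞ (with G^m(x,X) ≤ 1). Then μ(B) = ∑_{k=0}^∞ ∫ G^k(x,B) dν(x) for all measurable B ⊆ X. -/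
/-!
Written with kernel–measure composition, the balance equation says `μ = ν + G ∘ₘ μ`.
Substituting it into itself `m` times gives `μ = ∑_{j<m} G^j ∘ₘ ν + G^m ∘ₘ μ`, and the
remainder vanishes in the limit because its total mass `∫ G^m(x,X) dμ` tends to `0` by
dominated convergence (bound `1`, integrable since `μ` is finite).
-/

open MeasureTheory ProbabilityTheory Filter

open scoped ENNReal Topology

theorem ENNReal.eq_tsum_of_eq_sum_add {a : ℝ≥0∞} {f r : ℕ → ℝ≥0∞}
    (h : ∀ m, a = ∑ j ∈ Finset.range m, f j + r m) (hr : Tendsto r atTop (𝓝 0)) :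
    a = ∑' j, f j := by
  have hlim : Tendsto (fun m => ∑ j ∈ Finset.range m, f j + r m) atTop (𝓝 (∑' j, f j)) := by
    simpa using (ENNReal.tendsto_nat_tsum f).add hr
  exact tendsto_nhds_unique (tendsto_const_nhds.congr h) hlim

theorem MeasureTheory.Measure.tendsto_comp_apply_zero {α β : Type*} [MeasurableSpace α]
    [MeasurableSpace β] {κ : ℕ → Kernel α β} (μ : Measure α) [IsFiniteMeasure μ]
    (hκ_le : ∀ m x, κ m x Set.univ ≤ 1)
    (hκ : ∀ x, Tendsto (fun m => κ m x Set.univ) atTop (𝓝 0)) (s : Set β) :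
    Tendsto (fun m => (κ m ∘ₘ μ) s) atTop (𝓝 0) := by
  have huniv : Tendsto (fun m => (κ m ∘ₘ μ) Set.univ) atTop (𝓝 0) := by
    simp_rw [Measure.bind_apply MeasurableSet.univ (κ _).aemeasurable]
    simpa using tendsto_lintegral_of_dominated_convergence (fun _ => 1)
      (fun m => (κ m).measurable_coe MeasurableSet.univ)
      (fun m => .of_forall (hκ_le m)) (by simp) (.of_forall hκ)
  exact tendsto_of_tendsto_of_tendsto_of_le_of_le tendsto_const_nhds huniv
    (fun _ => zero_le) (fun _ => measure_mono (Set.subset_univ s))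

namespace kernelIter

variable {X : Type*} [MeasurableSpace X] (G : Kernel X X)

theorem succ_eq_comp (n : ℕ) : kernelIter G (n + 1) = kernelIter G n ∘ₖ G := by
  induction n with
  | zero => simp [kernelIter]
  | succ n ih =>
    change G ∘ₖ kernelIter G (n + 1) = (G ∘ₖ kernelIter G n) ∘ₖ G
    rw [ih, Kernel.comp_assoc]

theorem eq_sum_add_comp_of_eq_add_comp {ν μ : Measure X} (hbal : μ = ν + G ∘ₘ μ) (m : ℕ) :
    μ = ∑ j ∈ Finset.range m, kernelIter G j ∘ₘ ν + kernelIter G m ∘ₘ μ := by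
  induction m with
  | zero => simp [kernelIter, Measure.id_comp]
  | succ m ih =>
    conv_lhs => rw [ih]
    conv_lhs => enter [2]; rw [hbal]
    rw [Measure.comp_add, Measure.comp_assoc, ← succ_eq_comp, Finset.sum_range_succ, add_assoc]

end kernelIter

theorem stmt13_general {X : Type*} [MeasurableSpace X] (G : Kernel X X)
    (ν : Measure X)
    (μ : Measure X) [IsFiniteMeasure μ]
    (hbal : ∀ B : Set X, MeasurableSet B → μ B = ν B + ∫⁻ x, G x B ∂μ)
    (hbdd : ∀ (m : ℕ) (x : X), kernelIter G m x Set.univ ≤ 1)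
    (hto0 : ∀ x, Tendsto (fun m => kernelIter G m x Set.univ) atTop (nhds 0)) :
    ∀ B : Set X, MeasurableSet B →
      μ B = ∑' k : ℕ, ∫⁻ x, kernelIter G k x B ∂ν := by
  intro B hB
  have hμ : μ = ν + G ∘ₘ μ := by
    ext s hs
    rw [Measure.add_apply, Measure.bind_apply hs G.aemeasurable, hbal s hs]
  refine ENNReal.eq_tsum_of_eq_sum_add (r := fun m => (kernelIter G m ∘ₘ μ) B) (fun m => ?_)
    (μ.tendsto_comp_apply_zero hbdd hto0 B)
  conv_lhs => rw [kernelIter.eq_sum_add_comp_of_eq_add_comp G hμ m]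
  simp only [Measure.add_apply, Measure.coe_finsetSum, Finset.sum_apply,
    Measure.bind_apply hB (Kernel.aemeasurable _)]

/-- Uniqueness of the occupation measure: a finite measure `μ` satisfying the
balance equation `μ(B) = ν(B) + ∫ G(x,B) dμ(x)`, when `G^m(x,X) → 0` pointwise
and `G^m(x,X) ≤ 1`, equals `∑ₖ νG^k`. -/
theorem stmt13 {X : Type*} [MeasurableSpace X] (G : Kernel X X)
    (ν : Measure X) [IsFiniteMeasure ν]
    (μ : Measure X) [IsFiniteMeasure μ]
    (hbal : ∀ B : Set X, MeasurableSet B → μ B = ν B + ∫⁻ x, G x B ∂μ)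
    (hbdd : ∀ (m : ℕ) (x : X), kernelIter G m x Set.univ ≤ 1)
    (hto0 : ∀ x, Tendsto (fun m => kernelIter G m x Set.univ) atTop (nhds 0)) :
    ∀ B : Set X, MeasurableSet B →
      μ B = ∑' k : ℕ, ∫⁻ x, kernelIter G k x B ∂ν :=
  stmt13_general G ν μ hbal hbdd hto0
end
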